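/- arXiv:1405.6256 — 5 statements merged into one kernel-verified Lean document; each statement's English description precedes it below -/
import Mathlib

section
/- Let $r$ be an odd prime power and $\rho$ the quadratic multiplicative character of $\mathbb{F}_r$. For $k \geq 2$ even, $J(\rho, \ldots, \rho)$ ($k$ copies) equals $-\rho(-1)^{k/2} \, r^{(k-2)/2}$, and for $k$ odd it equals $\rho(-1)^{(k-1)/2} \, r^{(k-1)/2}$. -/
open scoped Classical in
/-- Extension of a multiplicative character to the whole field, with the paper's
convention that the trivial character `ε` satisfies `ε 0 = 1` (and `χ 0 = 0` for
nontrivial `χ`). -/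
noncomputable def paperExt {F : Type*} [CommMonoidWithZero F]
    (χ : MulChar F ℂ) : F → ℂ :=
  fun x => if χ = 1 ∧ x = 0 then 1 else χ x

open scoped Classical in
/-- The Jacobi sum `J(χ₁, …, χ_k) = ∑_{z₁ + ⋯ + z_k = 1} χ₁(z₁) ⋯ χ_k(z_k)`. -/
noncomputable def jacobiSumPaper {F : Type*} [Field F] [Fintype F] {k : ℕ}
    (χ : Fin k → MulChar F ℂ) : ℂ :=
  ∑ z ∈ Finset.univ.filter (fun z : Fin k → F => ∑ i, z i = 1),
    ∏ i, paperExt (χ i) (z i)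

open Finset
open scoped Classical
set_option linter.unusedSectionVars false

noncomputable def Tsum {F : Type*} [Field F] [Fintype F] (ρ : MulChar F ℂ)
    (k : ℕ) (a : F) : ℂ :=
  ∑ z : Fin k → F, if ∑ i, z i = a then ∏ i, ρ (z i) else 0

section aux

variable {F : Type*} [Field F] [Fintype F] (ρ : MulChar F ℂ)

lemma sum_pi_split {n : ℕ} (g : (Fin (n+1) → F) → ℂ) :
    ∑ z : Fin (n+1) → F, g z = ∑ t : F, ∑ y : Fin n → F, g (Fin.cons t y) := by
  rw [← ((Fin.consEquiv fun _ => F)).sum_comp, Fintype.sum_prod_type]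
  rfl

lemma Tsum_scale {a : F} (ha : a ≠ 0) (k : ℕ) :
    Tsum ρ k a = ρ a ^ k * Tsum ρ k 1 := by
  have hbij : Function.Bijective (fun (z : Fin k → F) => fun i => a * z i) := by
    constructor
    · intro z w h
      exact funext fun i => mul_left_cancel₀ ha (congrFun h i)
    · intro w
      exact ⟨fun i => a⁻¹ * w i, funext fun i => by field_simp⟩
  rw [Tsum, ← Fintype.sum_bijective _ hbij _ _ (fun z => rfl), Tsum, Finset.mul_sum]
  refine Finset.sum_congr rfl fun z _ => ?_
  have hcond : (∑ i, a * z i = a) ↔ (∑ i, z i = 1) := by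
    rw [← Finset.mul_sum]
    constructor
    · intro h; exact mul_left_cancel₀ ha (by rw [h, mul_one])
    · intro h; rw [h, mul_one]
  have hprod : ∏ i, ρ (a * z i) = ρ a ^ k * ∏ i, ρ (z i) := by
    simp only [map_mul, Finset.prod_mul_distrib, Finset.prod_const, Finset.card_univ,
      Fintype.card_fin]
  rw [mul_ite, mul_zero]
  by_cases hc : ∑ i, z i = 1
  · simp only [hcond.mpr hc, hc, if_true, hprod]
  · simp only [if_neg (fun h => hc (hcond.mp h)), if_neg hc]

lemma Tsum_total (hρ1 : ρ ≠ 1) {k : ℕ} (hk : k ≠ 0) :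
    ∑ a : F, Tsum ρ k a = 0 := by
  have h1 : ∑ a : F, Tsum ρ k a = ∑ z : Fin k → F, ∏ i, ρ (z i) := by
    rw [show (∑ a : F, Tsum ρ k a) =
        ∑ a : F, ∑ z : Fin k → F, (if ∑ i, z i = a then ∏ i, ρ (z i) else 0) from rfl,
      Finset.sum_comm]
    refine Finset.sum_congr rfl fun z _ => ?_
    simp
  have h2 : (∑ x : F, ρ x) ^ k = ∑ z : Fin k → F, ∏ i, ρ (z i) := by
    calc (∑ x : F, ρ x) ^ k = ∏ _i : Fin k, ∑ x : F, ρ x := by simp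
      _ = _ := by rw [Finset.prod_univ_sum]; simp
  rw [h1, ← h2, MulChar.sum_eq_zero_of_ne_one hρ1, zero_pow hk]

lemma Tsum_succ (k : ℕ) :
    Tsum ρ (k+1) 1 = ∑ t : F, ρ t * Tsum ρ k (1 - t) := by
  rw [Tsum, sum_pi_split]
  refine Finset.sum_congr rfl fun t _ => ?_
  rw [Tsum, Finset.mul_sum]
  refine Finset.sum_congr rfl fun y _ => ?_
  rw [Fin.sum_univ_succ, Fin.prod_univ_succ]
  simp only [Fin.cons_zero, Fin.cons_succ]
  rw [mul_ite, mul_zero, ← eq_sub_iff_add_eq']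

variable (hρ : ρ ^ 2 = 1) (hρ1 : ρ ≠ 1)
include hρ

lemma rho_sq (x : F) (hx : x ≠ 0) : ρ x * ρ x = 1 := by
  have := DFunLike.congr_fun hρ x
  rwa [pow_two, MulChar.mul_apply, MulChar.one_apply (isUnit_iff_ne_zero.2 hx)] at this

lemma rho_pow_even {k : ℕ} (hk : Even k) (x : F) (hx : x ≠ 0) : ρ x ^ k = 1 := by
  obtain ⟨m, rfl⟩ := hk
  rw [← two_mul, pow_mul, pow_two, rho_sq ρ hρ x hx, one_pow]

lemma rho_pow_odd {k : ℕ} (hk : Odd k) (x : F) : ρ x ^ k = ρ x := by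
  obtain ⟨m, rfl⟩ := hk
  by_cases hx : x = 0
  · subst hx; rw [MulChar.map_zero, zero_pow (by omega)]
  · rw [pow_add, pow_mul, pow_two, rho_sq ρ hρ x hx, one_pow, one_mul, pow_one]

include hρ1

lemma Tsum_zero_even {k : ℕ} (hk : Even k) (hk0 : k ≠ 0) :
    Tsum ρ k 0 = -((Fintype.card F : ℂ) - 1) * Tsum ρ k 1 := by
  have htot := Tsum_total ρ hρ1 hk0
  rw [← Finset.add_sum_erase _ _ (Finset.mem_univ (0 : F))] at htot
  have herase : ∑ a ∈ Finset.univ.erase (0 : F), Tsum ρ k a =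
      ((Fintype.card F : ℂ) - 1) * Tsum ρ k 1 := by
    rw [Finset.sum_congr rfl (fun a ha => by
      rw [Tsum_scale ρ (Finset.ne_of_mem_erase ha) k,
        rho_pow_even ρ hρ hk a (Finset.ne_of_mem_erase ha), one_mul])]
    rw [Finset.sum_const, Finset.card_erase_of_mem (Finset.mem_univ 0), Finset.card_univ]
    rw [nsmul_eq_mul]
    push_cast [Nat.cast_sub Fintype.card_pos]
    ring
  rw [herase] at htot
  linear_combination htot

lemma Tsum_zero_odd {k : ℕ} (hk : Odd k) :
    Tsum ρ k 0 = 0 := by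
  have htot := Tsum_total ρ hρ1 (k := k) (by rintro rfl; simp at hk)
  rw [← Finset.add_sum_erase _ _ (Finset.mem_univ (0 : F))] at htot
  have herase : ∑ a ∈ Finset.univ.erase (0 : F), Tsum ρ k a = 0 := by
    rw [Finset.sum_congr rfl (fun a ha => by
      rw [Tsum_scale ρ (Finset.ne_of_mem_erase ha) k, rho_pow_odd ρ hρ hk a])]
    rw [← Finset.sum_mul]
    have : ∑ a ∈ Finset.univ.erase (0 : F), ρ a = 0 := by
      rw [Finset.sum_erase_eq_sub (Finset.mem_univ 0), MulChar.sum_eq_zero_of_ne_one hρ1,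
        MulChar.map_zero, sub_zero]
    rw [this, zero_mul]
  rw [herase, add_zero] at htot
  exact htot

lemma Tsum_step_even {k : ℕ} (hk : Even k) (hk0 : k ≠ 0) :
    Tsum ρ (k+1) 1 = -(Fintype.card F : ℂ) * Tsum ρ k 1 := by
  rw [Tsum_succ, ← Finset.add_sum_erase _ _ (Finset.mem_univ (1 : F))]
  have herase : ∑ t ∈ Finset.univ.erase (1 : F), ρ t * Tsum ρ k (1 - t) =
      -(Tsum ρ k 1) := by
    rw [Finset.sum_congr rfl (fun t ht => by
      have h1t : (1 : F) - t ≠ 0 := sub_ne_zero.2 (Ne.symm (Finset.ne_of_mem_erase ht))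
      rw [Tsum_scale ρ h1t k, rho_pow_even ρ hρ hk _ h1t, one_mul])]
    rw [← Finset.sum_mul, Finset.sum_erase_eq_sub (Finset.mem_univ 1),
      MulChar.sum_eq_zero_of_ne_one hρ1, map_one]
    ring
  rw [herase, sub_self, Tsum_zero_even ρ hρ hρ1 hk hk0, map_one, one_mul]
  ring

lemma Tsum_step_odd {k : ℕ} (hk : Odd k) :
    Tsum ρ (k+1) 1 = -(ρ (-1)) * Tsum ρ k 1 := by
  have hz := Tsum_zero_odd ρ hρ hρ1 hk
  have hall : ∀ t : F, Tsum ρ k (1 - t) = ρ (1 - t) * Tsum ρ k 1 := by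
    intro t
    by_cases ht : (1 : F) - t = 0
    · rw [ht, hz, MulChar.map_zero, zero_mul]
    · rw [Tsum_scale ρ ht k, rho_pow_odd ρ hρ hk]
  rw [Tsum_succ]
  have hJ : ∑ t : F, ρ t * ρ (1 - t) = -(ρ (-1)) := by
    have hinv : ρ⁻¹ = ρ := by
      rw [inv_eq_of_mul_eq_one_right (by rw [← pow_two, hρ])]
    have := jacobiSum_nontrivial_inv hρ1
    rw [hinv] at this
    rw [← this, jacobiSum]
  calc ∑ t : F, ρ t * Tsum ρ k (1 - t)
      = ∑ t : F, (ρ t * ρ (1 - t)) * Tsum ρ k 1 := by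
        refine Finset.sum_congr rfl fun t _ => ?_; rw [hall t]; ring
    _ = (∑ t : F, ρ t * ρ (1 - t)) * Tsum ρ k 1 := by rw [Finset.sum_mul]
    _ = -(ρ (-1)) * Tsum ρ k 1 := by rw [hJ]

lemma Tsum_one : Tsum ρ 1 1 = 1 := by
  rw [Tsum, ← ((Equiv.funUnique (Fin 1) F).symm.sum_comp)]
  simp [Fin.sum_univ_one, Fin.prod_univ_one, Equiv.funUnique]

lemma Tsum_formula (k : ℕ) (hk1 : 1 ≤ k) :
    Tsum ρ k 1 = if Even k then
        -((ρ (-1)) ^ (k / 2)) * (Fintype.card F : ℂ) ^ ((k - 2) / 2)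
      else
        (ρ (-1)) ^ ((k - 1) / 2) * (Fintype.card F : ℂ) ^ ((k - 1) / 2) := by
  induction k, hk1 using Nat.le_induction with
  | base => rw [Tsum_one ρ hρ hρ1]; norm_num
  | succ k hk ih =>
    by_cases he : Even k
    · -- k even ≥ 2, k+1 odd
      obtain ⟨m, rfl⟩ := he
      have hm : 1 ≤ m := by omega
      rw [Tsum_step_even ρ hρ hρ1 ⟨m, rfl⟩ (by omega), ih,
        if_pos ⟨m, rfl⟩, if_neg (by simp [Nat.even_add_one, parity_simps])]
      have h1 : (m + m) / 2 = m := by omega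
      have h2 : (m + m - 2) / 2 = m - 1 := by omega
      have h3 : (m + m + 1 - 1) / 2 = m := by omega
      rw [h1, h2, h3]
      have : (Fintype.card F : ℂ) ^ m = (Fintype.card F : ℂ) * (Fintype.card F : ℂ) ^ (m - 1) := by
        rw [← pow_succ']
        congr 1
        omega
      rw [this]; ring
    · -- k odd, k+1 even
      have ho : Odd k := Nat.odd_iff.2 (Nat.not_even_iff.1 he)
      obtain ⟨m, rfl⟩ := ho
      rw [Tsum_step_odd ρ hρ hρ1 ⟨m, rfl⟩, ih, if_neg (by simp [parity_simps]),
        if_pos (by simp [parity_simps])]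
      have h1 : (2 * m + 1 - 1) / 2 = m := by omega
      have h2 : (2 * m + 1 + 1) / 2 = m + 1 := by omega
      have h3 : (2 * m + 1 + 1 - 2) / 2 = m := by omega
      rw [h1, h2, h3, pow_succ]
      ring

end aux

theorem stmt_5 (F : Type*) [Field F] [Fintype F] (hodd : Odd (Fintype.card F))
    (ρ : MulChar F ℂ) (hρ : ρ ^ 2 = 1) (hρ1 : ρ ≠ 1)
    (k : ℕ) (hk : 2 ≤ k) :
    jacobiSumPaper (fun _ : Fin k => ρ) =
      if Even k then
        -((ρ (-1)) ^ (k / 2)) * (Fintype.card F : ℂ) ^ ((k - 2) / 2)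
      else
        (ρ (-1)) ^ ((k - 1) / 2) * (Fintype.card F : ℂ) ^ ((k - 1) / 2) := by
  have hJ : jacobiSumPaper (fun _ : Fin k => ρ) = Tsum ρ k 1 := by
    rw [jacobiSumPaper, Tsum, Finset.sum_filter]
    refine Finset.sum_congr rfl fun z _ => ?_
    simp [paperExt, hρ1]
  rw [hJ, Tsum_formula ρ hρ hρ1 k (by omega)]
end

section
/- Let $r$ be an odd prime power which is an even power of a prime (so $-1$ is a square in $\mathbb{F}_r$), and let $u, v \geq 0$ with $u + v \geq 1$. Let $C_0^{(2,r)} \subseteq \mathbb{F}_r^*$ be the set of nonzero squares and $C_1^{(2,r)} = \mathbb{F}_r^* \setminus C_0^{(2,r)}$ the set of nonsquares. For a sequence $(i_1,\ldots,i_{u+v}) \in \{0,1\}^{u+v}$ with exactly $u$ zeros and $v$ ones, let $\Omega := \#\{(x_1,\ldots,x_{u+v-1}) \in (\mathbb{F}_r^*)^{u+v-1} : x_j \in C_{i_j}^{(2,r)} \text{ for } 1 \le j \le u+v-1, \ \sum_{j} x_j \in C_{i_{u+v}}^{(2,r)}\}$. Then $\Omega = \frac{r-1}{r \cdot 2^{u+v+1}}\Big\{2(r-1)^{u+v-1}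 + (-1)^{u+v}\big[(1+\sqrt{r})^u(1-\sqrt{r})^v + (1-\sqrt{r})^u(1+\sqrt{r})^v\big]\Big\}$, where $\sqrt{r}$ denotes the positive square root of $r$. -/
set_option linter.unusedSectionVars false
set_option linter.unusedVariables false
set_option maxHeartbeats 1000000


/-- `y` lies in the cyclotomic class `C_c^{(2,r)}`: it is a nonzero square if
`c = 0`, and a nonsquare if `c = 1`. -/
def inClass {F : Type*} [Field F] (y : F) (c : Fin 2) : Prop :=
  y ≠ 0 ∧ (IsSquare y ↔ c = 0)

section
variable (F : Type*) [Field F] [Fintype F] [DecidableEq F]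

noncomputable def qc : MulChar F ℂ := (quadraticChar F).ringHomComp (Int.castRingHom ℂ)

variable {F}

lemma qc_apply (a : F) : qc F a = ((quadraticChar F a : ℤ) : ℂ) := rfl

lemma char_ne_two (hodd : Odd (Fintype.card F)) : ringChar F ≠ 2 := by
  intro h
  have h2 := FiniteField.even_card_of_char_two h
  obtain ⟨k, hk⟩ := hodd
  omega

lemma qc_ne_one (hodd : Odd (Fintype.card F)) : qc F ≠ 1 := by
  obtain ⟨a, ha⟩ := quadraticChar_exists_neg_one (char_ne_two hodd)
  intro h
  have ha0 : a ≠ 0 := by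
    intro h0; rw [h0, quadraticChar_zero] at ha; exact absurd ha (by norm_num)
  have : qc F a = 1 := by rw [h]; exact MulChar.one_apply (Ne.isUnit ha0)
  rw [qc_apply, ha] at this
  norm_num at this

lemma qc_sq (a : F) (ha : a ≠ 0) : qc F a * qc F a = 1 := by
  rw [qc_apply, ← Int.cast_mul, ← sq, quadraticChar_sq_one ha, Int.cast_one]

lemma qc_dichotomy (a : F) (ha : a ≠ 0) : qc F a = 1 ∨ qc F a = -1 := by
  rcases quadraticChar_dichotomy ha with h | h <;> [left; right] <;>
    rw [qc_apply, h] <;> norm_num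

lemma qc_neg_one (hsq : IsSquare (-1 : F)) : qc F (-1) = 1 := by
  rw [qc_apply, (quadraticChar_one_iff_isSquare (by simp : (-1:F) ≠ 0)).mpr hsq, Int.cast_one]

/-- indicator of `inClass y c` as a complex number -/
noncomputable def ind (c : Fin 2) (y : F) : ℂ :=
  qc F y * ((-1) ^ (c : ℕ) + qc F y) / 2

open scoped Classical in
lemma ind_eq (c : Fin 2) (y : F) : ind c y = if inClass y c then 1 else 0 := by
  by_cases hy : y = 0
  · rw [if_neg (fun h => h.1 hy)]
    simp [ind, qc_apply, hy, quadraticChar_zero]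
  · rcases qc_dichotomy y hy with h | h
    · have hq : quadraticChar F y = 1 := by
        have : ((quadraticChar F y : ℤ) : ℂ) = 1 := h
        exact_mod_cast this
      have hsqy : IsSquare y := (quadraticChar_one_iff_isSquare hy).mp hq
      fin_cases c
      · rw [if_pos ⟨hy, by simp [hsqy]⟩]; simp [ind, h]
      · rw [if_neg (fun hc => by simpa [hsqy] using hc.2)]
        simp [ind, h]
    · have hq : quadraticChar F y = -1 := by
        have : ((quadraticChar F y : ℤ) : ℂ) = -1 := h
        exact_mod_cast this
      have hsqy : ¬ IsSquare y := quadraticChar_neg_one_iff_not_isSquare.mp hq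
      fin_cases c
      · rw [if_neg (fun hc => hsqy (hc.2.mpr rfl))]
        simp [ind, h]
      · rw [if_pos ⟨hy, by simp [hsqy]⟩]; simp [ind, h]

end

section
variable {F : Type*} [Field F] [Fintype F] [DecidableEq F]

noncomputable def psiF (F : Type*) [Field F] [Fintype F] : AddChar F ℂ :=
  AddChar.FiniteField.primitiveChar_to_Complex F

lemma psiF_prim (F : Type*) [Field F] [Fintype F] : (psiF F).IsPrimitive :=
  AddChar.FiniteField.primitiveChar_to_Complex_isPrimitive F

lemma sum_psiF (b : F) : ∑ x : F, psiF F (x * b) = if b = 0 then (Fintype.card F : ℂ) else 0 :=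
by
  rw [AddChar.sum_mulShift b (psiF_prim F)]
  split_ifs <;> simp

noncomputable def G (c : Fin 2) (a : F) : ℂ := ∑ y : F, ind c y * psiF F (a * y)

lemma ind_expand (c : Fin 2) (y : F) :
    ind c y = ((-1) ^ (c : ℕ) * qc F y + qc F y * qc F y) / 2 := by
  simp only [ind]; ring

lemma sum_sq_qc (a : F) :
    ∑ y : F, (qc F y * qc F y) * psiF F (a * y)
      = (if a = 0 then (Fintype.card F : ℂ) else 0) - 1 := by
  have h1 : ∑ y : F, (qc F y * qc F y) * psiF F (a * y)
      = ∑ y : F, (if y = 0 then 0 else psiF F (a * y)) := by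
    refine Finset.sum_congr rfl fun y _ => ?_
    by_cases hy : y = 0
    · simp [hy, qc_apply, quadraticChar_zero]
    · rw [if_neg hy, qc_sq y hy, one_mul]
  have h2 : ∑ y : F, (if y = 0 then psiF F (a * y) else 0) = 1 := by
    rw [Finset.sum_ite_eq' Finset.univ (0 : F) (fun y => psiF F (a * y))]
    simp
  have h3 : ∑ y : F, psiF F (a * y) = if a = 0 then (Fintype.card F : ℂ) else 0 := by
    simp_rw [mul_comm a]; exact sum_psiF a
  have h4 : (∑ y : F, (if y = 0 then 0 else psiF F (a * y)))
        + (∑ y : F, (if y = 0 then psiF F (a * y) else 0))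
      = ∑ y : F, psiF F (a * y) := by
    rw [← Finset.sum_add_distrib]
    refine Finset.sum_congr rfl fun y _ => ?_
    split_ifs <;> ring
  rw [h1, ← h3, ← h4, h2]
  ring

lemma sum_qc_psiF (hodd : Odd (Fintype.card F)) (a : F) :
    ∑ y : F, qc F y * psiF F (a * y)
      = if a = 0 then 0 else qc F a * gaussSum (qc F) (psiF F) := by
  by_cases ha : a = 0
  · simp only [ha, if_pos, zero_mul, AddChar.map_zero_eq_one, mul_one]
    exact MulChar.sum_eq_zero_of_ne_one (qc_ne_one hodd)
  · rw [if_neg ha]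
    have h := gaussSum_mulShift (qc F) (psiF F) (Units.mk0 a ha)
    rw [show ((Units.mk0 a ha : Fˣ) : F) = a from rfl] at h
    have h2 : gaussSum (qc F) (AddChar.mulShift (psiF F) a)
        = ∑ y : F, qc F y * psiF F (a * y) := by
      simp [gaussSum, AddChar.mulShift_apply]
    rw [h2] at h
    calc ∑ y : F, qc F y * psiF F (a * y)
        = (qc F a * qc F a) * ∑ y : F, qc F y * psiF F (a * y) := by
          rw [qc_sq a ha, one_mul]
      _ = qc F a * gaussSum (qc F) (psiF F) := by rw [mul_assoc, h]

lemma G_apply (hodd : Odd (Fintype.card F)) (c : Fin 2) (a : F) :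
    G c a = ((-1) ^ (c : ℕ) * (if a = 0 then 0 else qc F a * gaussSum (qc F) (psiF F))
      + ((if a = 0 then (Fintype.card F : ℂ) else 0) - 1)) / 2 := by
  unfold G
  have key : ∑ y : F, ind c y * psiF F (a * y)
      = ((-1) ^ (c : ℕ) * ∑ y : F, qc F y * psiF F (a * y)
        + ∑ y : F, (qc F y * qc F y) * psiF F (a * y)) / 2 := by
    rw [Finset.mul_sum, ← Finset.sum_add_distrib, Finset.sum_div]
    exact Finset.sum_congr rfl fun y _ => by rw [ind_expand]; ring
  rw [key, sum_qc_psiF hodd a, sum_sq_qc a]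

end

section
variable {F : Type*} [Field F] [Fintype F] [DecidableEq F]

lemma card_ne_zero_C : (Fintype.card F : ℂ) ≠ 0 := by
  exact_mod_cast Fintype.card_ne_zero

lemma ind_fourier (c : Fin 2) (s : F) :
    ind c s = (Fintype.card F : ℂ)⁻¹ * ∑ a : F, G c (-a) * psiF F (a * s) := by
  have h1 : ∀ a : F, G c (-a) * psiF F (a * s)
      = ∑ t : F, ind c t * psiF F (a * (s - t)) := by
    intro a
    rw [G, Finset.sum_mul]
    refine Finset.sum_congr rfl fun t _ => ?_
    rw [mul_assoc, ← AddChar.map_add_eq_mul]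
    ring_nf
  simp_rw [h1]
  rw [Finset.sum_comm]
  have h2 : ∀ t : F, ∑ a : F, ind c t * psiF F (a * (s - t))
      = ind c t * (if t = s then (Fintype.card F : ℂ) else 0) := by
    intro t
    rw [← Finset.mul_sum, sum_psiF (s - t)]
    congr 1
    simp [sub_eq_zero, eq_comm]
  simp_rw [h2, mul_ite, mul_zero]
  rw [Finset.sum_ite_eq' Finset.univ s (fun t => ind c t * (Fintype.card F : ℂ))]
  simp only [Finset.mem_univ, if_true]
  field_simp

end

section
variable {F : Type*} [Field F] [Fintype F] [DecidableEq F]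

lemma psiF_map_sum {ι : Type*} (s : Finset ι) (f : ι → F) :
    psiF F (∑ j ∈ s, f j) = ∏ j ∈ s, psiF F (f j) := by
  classical
  induction s using Finset.cons_induction with
  | empty => simp
  | cons a s ha ih => rw [Finset.sum_cons, Finset.prod_cons, AddChar.map_add_eq_mul, ih]

end

section
variable {F : Type*} [Field F] [Fintype F] [DecidableEq F]

open Finset in
open scoped Classical in
lemma count_eq (n : ℕ) (i : Fin (n + 1) → Fin 2) :
    ((univ.filter fun x : Fin n → F =>
        (∀ j : Fin n, inClass (x j) (i j.castSucc)) ∧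
          inClass (∑ j, x j) (i (Fin.last n))).card : ℂ)
      = (Fintype.card F : ℂ)⁻¹ *
          ∑ a : F, (∏ j : Fin n, G (i j.castSucc) a) * G (i (Fin.last n)) (-a) := by
  rw [← Finset.sum_boole]
  have hx : ∀ x : Fin n → F,
      (if ((∀ j : Fin n, inClass (x j) (i j.castSucc)) ∧
          inClass (∑ j, x j) (i (Fin.last n))) then (1 : ℂ) else 0)
        = (∏ j : Fin n, ind (i j.castSucc) (x j)) * ind (i (Fin.last n)) (∑ j, x j) := by
    intro x
    have hp : ∏ j : Fin n, ind (i j.castSucc) (x j)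
        = if (∀ j : Fin n, inClass (x j) (i j.castSucc)) then (1 : ℂ) else 0 := by
      simp_rw [ind_eq]
      rw [Finset.prod_boole]
      simp
    rw [hp, ind_eq]
    split_ifs with h1 h2 h3 <;> simp_all
  simp_rw [hx]
  have key : ∀ a : F,
      ∑ x : Fin n → F, (∏ j, ind (i j.castSucc) (x j)) * psiF F (a * ∑ j, x j)
        = ∏ j : Fin n, G (i j.castSucc) a := by
    intro a
    have h1 : ∀ x : Fin n → F,
        (∏ j, ind (i j.castSucc) (x j)) * psiF F (a * ∑ j, x j)
          = ∏ j, (ind (i j.castSucc) (x j) * psiF F (a * x j)) := by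
      intro x
      rw [Finset.mul_sum, psiF_map_sum, ← Finset.prod_mul_distrib]
    simp_rw [h1]
    rw [← Fintype.prod_sum (fun (j : Fin n) (y : F) => ind (i j.castSucc) y * psiF F (a * y))]
    rfl
  calc ∑ x : Fin n → F,
        (∏ j, ind (i j.castSucc) (x j)) * ind (i (Fin.last n)) (∑ j, x j)
      = ∑ x : Fin n → F, ∑ a : F, (Fintype.card F : ℂ)⁻¹ *
          (G (i (Fin.last n)) (-a) *
            ((∏ j, ind (i j.castSucc) (x j)) * psiF F (a * ∑ j, x j))) := by
        refine Finset.sum_congr rfl fun x _ => ?_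
        rw [ind_fourier (i (Fin.last n)) (∑ j, x j), ← mul_assoc, Finset.mul_sum]
        exact Finset.sum_congr rfl fun a _ => by ring
    _ = ∑ a : F, ∑ x : Fin n → F, (Fintype.card F : ℂ)⁻¹ *
          (G (i (Fin.last n)) (-a) *
            ((∏ j, ind (i j.castSucc) (x j)) * psiF F (a * ∑ j, x j))) :=
        Finset.sum_comm
    _ = ∑ a : F, (Fintype.card F : ℂ)⁻¹ *
          ((∏ j : Fin n, G (i j.castSucc) a) * G (i (Fin.last n)) (-a)) := by
        refine Finset.sum_congr rfl fun a _ => ?_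
        rw [← Finset.mul_sum, ← Finset.mul_sum, key a]
        ring
    _ = _ := by rw [← Finset.mul_sum]

end

section
variable {F : Type*} [Field F] [Fintype F] [DecidableEq F]

open Finset in
lemma prod_fin_two {n u v : ℕ} (i : Fin (n + 1) → Fin 2)
    (h0 : Set.ncard {j | i j = 0} = u) (h1 : Set.ncard {j | i j = 1} = v)
    (f : Fin 2 → ℂ) : ∏ j, f (i j) = f 0 ^ u * f 1 ^ v := by
  classical
  have hnot : ∀ c : Fin 2, (¬ c = 0) ↔ c = 1 := by decide
  have hcard0 : (univ.filter fun j => i j = 0).card = u := by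
    rw [← h0, Set.ncard_eq_toFinset_card']
    congr 1
    ext j
    simp
  have hcard1 : (univ.filter fun j => ¬ i j = 0).card = v := by
    rw [← h1, Set.ncard_eq_toFinset_card']
    congr 1
    ext j
    simp [hnot]
  have : ∀ j, f (i j) = if i j = 0 then f 0 else f 1 := by
    intro j
    split_ifs with h
    · rw [h]
    · rw [(hnot (i j)).mp h]
  simp_rw [this]
  rw [Finset.prod_ite, Finset.prod_const, Finset.prod_const, hcard0, hcard1]

end

section
variable {F : Type*} [Field F] [Fintype F] [DecidableEq F]

open Finset in
lemma sum_eval (hodd : Odd (Fintype.card F)) (hsq : IsSquare (-1 : F))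
    {n u v : ℕ} (i : Fin (n + 1) → Fin 2)
    (h0 : Set.ncard {j | i j = 0} = u) (h1 : Set.ncard {j | i j = 1} = v) :
    ∑ a : F, (∏ j : Fin n, G (i j.castSucc) a) * G (i (Fin.last n)) (-a)
      = (((Fintype.card F : ℂ) - 1) / 2) ^ (n + 1)
        + ((Fintype.card F : ℂ) - 1) *
          ((((gaussSum (qc F) (psiF F) - 1) / 2) ^ u *
              ((-gaussSum (qc F) (psiF F) - 1) / 2) ^ v
            + ((-gaussSum (qc F) (psiF F) - 1) / 2) ^ u *
              ((gaussSum (qc F) (psiF F) - 1) / 2) ^ v)) / 2 := by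
  set g := gaussSum (qc F) (psiF F) with hg
  set T : F → ℂ := fun a => (∏ j : Fin n, G (i j.castSucc) a) * G (i (Fin.last n)) (-a) with hT
  -- value at 0
  have hG0 : ∀ c : Fin 2, G c (0 : F) = ((Fintype.card F : ℂ) - 1) / 2 := by
    intro c
    rw [G_apply hodd c 0, if_pos rfl, if_pos rfl]
    ring
  have hT0 : T 0 = (((Fintype.card F : ℂ) - 1) / 2) ^ (n + 1) := by
    simp only [hT, neg_zero, hG0]
    rw [Finset.prod_const]
    simp [pow_succ, Finset.card_univ]
  -- value at a ≠ 0
  have hqcneg : ∀ a : F, qc F (-a) = qc F a := by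
    intro a
    have : (-a : F) = -1 * a := by ring
    rw [this, map_mul, qc_neg_one hsq, one_mul]
  have hTa : ∀ a : F, a ≠ 0 →
      T a = ∏ j : Fin (n + 1), (((-1) ^ ((i j : ℕ)) * (qc F a * g) - 1) / 2) := by
    intro a ha
    have hGa : ∀ c : Fin 2, G c a = ((-1) ^ ((c : ℕ)) * (qc F a * g) - 1) / 2 := by
      intro c
      rw [G_apply hodd c a, if_neg ha, if_neg ha]
      ring
    have hGna : G (i (Fin.last n)) (-a)
        = ((-1) ^ ((i (Fin.last n) : ℕ)) * (qc F a * g) - 1) / 2 := by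
      rw [G_apply hodd _ (-a), if_neg (neg_ne_zero.mpr ha), if_neg (neg_ne_zero.mpr ha),
        hqcneg a]
      ring
    rw [hT]
    simp only
    rw [Fin.prod_univ_castSucc (fun j : Fin (n + 1) =>
      (((-1) ^ ((i j : ℕ)) * (qc F a * g) - 1) / 2)), hGna]
    congr 1
    exact Finset.prod_congr rfl fun j _ => hGa (i j.castSucc)
  -- the symmetric function H
  set H : ℂ → ℂ := fun t => ((t - 1) / 2) ^ u * ((-t - 1) / 2) ^ v with hH
  have hHt : ∀ t : ℂ, ∏ j : Fin (n + 1), (((-1) ^ ((i j : ℕ)) * t - 1) / 2) = H t := by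
    intro t
    rw [prod_fin_two i h0 h1 (fun c => ((-1) ^ ((c : ℕ)) * t - 1) / 2)]
    simp only [hH, Fin.val_zero, Fin.val_one, pow_zero, pow_one, one_mul, neg_one_mul]
  have hTa' : ∀ a : F, a ≠ 0 →
      T a = (H g + H (-g)) / 2 + qc F a * ((H g - H (-g)) / 2) := by
    intro a ha
    rw [hTa a ha, hHt (qc F a * g)]
    rcases qc_dichotomy a ha with h | h
    · rw [h, one_mul]; ring
    · rw [h, neg_one_mul]; ring
  -- split off a = 0
  rw [← Finset.add_sum_erase univ T (Finset.mem_univ (0 : F)), hT0]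
  congr 1
  have hqc0 : qc F (0 : F) = 0 := by simp [qc_apply, quadraticChar_zero]
  have hsumqc : ∑ a ∈ univ.erase (0 : F), qc F a = 0 := by
    rw [Finset.sum_erase _ hqc0]
    exact MulChar.sum_eq_zero_of_ne_one (qc_ne_one hodd)
  have hcard1 : (1 : ℕ) ≤ Fintype.card F := Fintype.card_pos
  calc ∑ a ∈ univ.erase (0 : F), T a
      = ∑ a ∈ univ.erase (0 : F),
          ((H g + H (-g)) / 2 + qc F a * ((H g - H (-g)) / 2)) :=
        Finset.sum_congr rfl fun a ha => hTa' a (Finset.ne_of_mem_erase ha)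
    _ = ((univ.erase (0 : F)).card : ℂ) * ((H g + H (-g)) / 2)
        + (∑ a ∈ univ.erase (0 : F), qc F a) * ((H g - H (-g)) / 2) := by
        rw [Finset.sum_add_distrib, Finset.sum_const, nsmul_eq_mul, ← Finset.sum_mul]
    _ = ((Fintype.card F : ℂ) - 1) * ((H g + H (-g)) / 2) := by
        rw [hsumqc, Finset.card_erase_of_mem (Finset.mem_univ 0), Finset.card_univ,
          Nat.cast_sub hcard1]
        push_cast
        ring
    _ = _ := by
        simp only [hH, neg_neg]
        ring

end

section
variable {F : Type*} [Field F] [Fintype F] [DecidableEq F]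

lemma g_sq (hodd : Odd (Fintype.card F)) (hsq : IsSquare (-1 : F)) :
    gaussSum (qc F) (psiF F) ^ 2 = (Fintype.card F : ℂ) := by
  rw [gaussSum_sq (qc_ne_one hodd) ((quadraticChar_isQuadratic F).comp (Int.castRingHom ℂ))
    (psiF_prim F)]
  rw [qc_neg_one hsq, one_mul]

end

lemma alg_identity (n u v : ℕ) (hn : n + 1 = u + v) (r s : ℂ) (hr : r ≠ 0) :
    r⁻¹ * (((r-1)/2)^(n+1) + (r-1)*(((s-1)/2)^u*((-s-1)/2)^v + ((-s-1)/2)^u*((s-1)/2)^v)/2)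
    = (r-1)/(r*2^(u+v+1)) * (2*(r-1)^n + (-1)^(u+v)*((1+s)^u*(1-s)^v + (1-s)^u*(1+s)^v)) := by
  obtain ⟨A, hA⟩ : ∃ A : ℂ, A = (1+s)/2 := ⟨_, rfl⟩
  obtain ⟨B, hB⟩ : ∃ B : ℂ, B = (1-s)/2 := ⟨_, rfl⟩
  have h3 : ((-1 : ℂ))^u * ((-1 : ℂ))^v = (-1)^(n+1) := by rw [← pow_add, ← hn]
  have h4 : (2 : ℂ)^u * (2 : ℂ)^v = 2^(n+1) := by rw [← pow_add, ← hn]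
  have e1 : ((s-1)/2 : ℂ) = -B := by rw [hB]; ring
  have e2 : ((-s-1)/2 : ℂ) = -A := by rw [hA]; ring
  have e3 : (1+s : ℂ) = 2*A := by rw [hA]; ring
  have e4 : (1-s : ℂ) = 2*B := by rw [hB]; ring
  have h5 : ((s-1)/2 : ℂ)^u * ((-s-1)/2)^v = (-1)^(n+1) * (B^u * A^v) := by
    rw [e1, e2, neg_pow, neg_pow, ← h3]; ring
  have h6 : ((-s-1)/2 : ℂ)^u * ((s-1)/2)^v = (-1)^(n+1) * (A^u * B^v) := by
    rw [e1, e2, neg_pow, neg_pow, ← h3]; ring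
  have h7 : ((1+s) : ℂ)^u * (1-s)^v = 2^(n+1) * (A^u * B^v) := by
    rw [e3, e4, mul_pow, mul_pow, ← h4]; ring
  have h8 : ((1-s) : ℂ)^u * (1+s)^v = 2^(n+1) * (B^u * A^v) := by
    rw [e3, e4, mul_pow, mul_pow, ← h4]; ring
  rw [h5, h6, h7, h8, ← hn]
  have h2ne : (2 : ℂ) ≠ 0 := two_ne_zero
  have hp : (2 : ℂ)^(n+1) ≠ 0 := pow_ne_zero _ h2ne
  rw [div_pow (r-1) 2 (n+1)]
  field_simp
  ring


theorem stmt_11 (F : Type*) [Field F] [Fintype F]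
    (hodd : Odd (Fintype.card F)) (hsq : IsSquare (-1 : F))
    (hpow : ∃ s : ℕ, s ^ 2 = Fintype.card F)
    (u v n : ℕ) (hn : n + 1 = u + v)
    (i : Fin (n + 1) → Fin 2)
    (h0 : Set.ncard {j | i j = 0} = u) (h1 : Set.ncard {j | i j = 1} = v) :
    (Set.ncard {x : Fin n → F |
        (∀ j : Fin n, inClass (x j) (i j.castSucc)) ∧
          inClass (∑ j, x j) (i (Fin.last n))} : ℝ) =
      ((Fintype.card F : ℝ) - 1) / ((Fintype.card F : ℝ) * 2 ^ (u + v + 1)) *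
        (2 * ((Fintype.card F : ℝ) - 1) ^ n +
          (-1) ^ (u + v) *
            ((1 + Real.sqrt (Fintype.card F)) ^ u *
                (1 - Real.sqrt (Fintype.card F)) ^ v +
              (1 - Real.sqrt (Fintype.card F)) ^ u *
                (1 + Real.sqrt (Fintype.card F)) ^ v)) := by
  classical
  have hset : {x : Fin n → F |
        (∀ j : Fin n, inClass (x j) (i j.castSucc)) ∧
          inClass (∑ j, x j) (i (Fin.last n))}.ncard
      = (Finset.univ.filter fun x : Fin n → F =>
          (∀ j : Fin n, inClass (x j) (i j.castSucc)) ∧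
            inClass (∑ j, x j) (i (Fin.last n))).card := by
    rw [Set.ncard_eq_toFinset_card']
    congr 1
    ext x
    simp
  set r : ℂ := (Fintype.card F : ℂ) with hr
  set s : ℂ := ((Real.sqrt (Fintype.card F) : ℝ) : ℂ) with hs
  have hrne : r ≠ 0 := card_ne_zero_C
  have hs2 : s ^ 2 = r := by
    rw [hs, hr, ← Complex.ofReal_pow, Real.sq_sqrt (Nat.cast_nonneg _)]
    simp
  set g : ℂ := gaussSum (qc F) (psiF F) with hg
  have hgs : g = s ∨ g = -s := by
    have hz : (g - s) * (g + s) = 0 := by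
      have : (g - s) * (g + s) = g ^ 2 - s ^ 2 := by ring
      rw [this, g_sq hodd hsq, hs2, ← hr, sub_self]
    rcases mul_eq_zero.mp hz with h | h
    · exact Or.inl (sub_eq_zero.mp h)
    · exact Or.inr (eq_neg_of_add_eq_zero_left h)
  have hE : ((g-1)/2)^u * ((-g-1)/2)^v + ((-g-1)/2)^u * ((g-1)/2)^v
      = ((s-1)/2)^u * ((-s-1)/2)^v + ((-s-1)/2)^u * ((s-1)/2)^v := by
    rcases hgs with h | h <;> rw [h] <;> ring_nf
  have hC : ((Finset.univ.filter fun x : Fin n → F =>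
        (∀ j : Fin n, inClass (x j) (i j.castSucc)) ∧
          inClass (∑ j, x j) (i (Fin.last n))).card : ℂ)
      = (r - 1) / (r * 2 ^ (u + v + 1)) *
          (2 * (r - 1) ^ n + (-1) ^ (u + v) *
            ((1 + s) ^ u * (1 - s) ^ v + (1 - s) ^ u * (1 + s) ^ v)) := by
    rw [count_eq n i, sum_eval hodd hsq i h0 h1, ← hg, ← hr, hE]
    exact alg_identity n u v hn r s hrne
  have key : (({x : Fin n → F |
        (∀ j : Fin n, inClass (x j) (i j.castSucc)) ∧
          inClass (∑ j, x j) (i (Fin.last n))}.ncard : ℝ) : ℂ)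
      = (((Fintype.card F : ℝ) - 1) / ((Fintype.card F : ℝ) * 2 ^ (u + v + 1)) *
        (2 * ((Fintype.card F : ℝ) - 1) ^ n +
          (-1) ^ (u + v) *
            ((1 + Real.sqrt (Fintype.card F)) ^ u *
                (1 - Real.sqrt (Fintype.card F)) ^ v +
              (1 - Real.sqrt (Fintype.card F)) ^ u *
                (1 + Real.sqrt (Fintype.card F)) ^ v)) : ℝ) := by
    rw [hset]
    push_cast
    rw [← hs, ← hr] at *
    exact_mod_cast hC
  exact_mod_cast key
end

section
/- Let $r$ be an odd prime power with $-1$ a square in $\mathbb{F}_r$. Then the number of pairs $(x,y) \in (\mathbb{F}_r^*)^2$ with $x$ a nonzero square, $y$ a nonsquare, and $x + y$ a nonsquare equals $\frac{(r-1)^2}{8}$. -/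
open Finset

section aux

variable {F : Type*} [Field F] [Fintype F] [DecidableEq F]

private lemma aux_sum_sq_mul (g : F → ℤ) :
    ∑ u : F, (quadraticChar F u) ^ 2 * g u = (∑ u : F, g u) - g 0 := by
  have h : ∀ u : F, (quadraticChar F u) ^ 2 * g u
      = g u - (if u = 0 then g u else 0) := by
    intro u
    rcases eq_or_ne u 0 with h | h
    · simp [h]
    · rw [if_neg h, sub_zero, quadraticChar_sq_one h, one_mul]
  rw [Finset.sum_congr rfl fun u _ => h u, Finset.sum_sub_distrib,
    Finset.sum_ite_eq' Finset.univ (0 : F) g]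
  simp

private lemma aux_shift (hF : ringChar F ≠ 2) (x : F) :
    ∑ y : F, quadraticChar F (x + y) = 0 := by
  rw [Fintype.sum_equiv (Equiv.addLeft x) (fun y => quadraticChar F (x + y))
    (fun y => quadraticChar F y) (fun y => rfl)]
  exact quadraticChar_sum_zero hF

private lemma aux_J (hF : ringChar F ≠ 2) :
    ∑ u : F, quadraticChar F u * quadraticChar F (u + 1) = -1 := by
  have h1 : ∀ u : F, quadraticChar F u * quadraticChar F (u + 1)
      = (quadraticChar F u) ^ 2 * quadraticChar F (1 + u⁻¹) := by
    intro u
    rcases eq_or_ne u 0 with h | h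
    · simp [h]
    · have : u + 1 = u * (1 + u⁻¹) * 1 := by field_simp
      rw [this, map_mul, map_mul, map_one, mul_one, sq]
      ring
  rw [Finset.sum_congr rfl fun u _ => h1 u]
  have h2 : ∑ u : F, (quadraticChar F u) ^ 2 * quadraticChar F (1 + u⁻¹)
      = ∑ u : F, (quadraticChar F u) ^ 2 * quadraticChar F (1 + u) := by
    apply Fintype.sum_equiv (Equiv.inv F)
    intro u
    simp only [Equiv.inv_apply, inv_inv]
    rcases eq_or_ne u 0 with h | h
    · simp [h]
    · rw [quadraticChar_sq_one h, quadraticChar_sq_one (inv_ne_zero h)]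
  rw [h2, aux_sum_sq_mul (fun u => quadraticChar F (1 + u)), aux_shift hF]
  simp

private lemma aux_L3 (hF : ringChar F ≠ 2) {x : F} (hx : x ≠ 0) :
    ∑ y : F, quadraticChar F y * quadraticChar F (x + y) = -1 := by
  rw [← Equiv.sum_comp (Equiv.mulLeft₀ x hx)
    (fun y => quadraticChar F y * quadraticChar F (x + y))]
  simp only [Equiv.mulLeft₀_apply]
  have key : ∀ t : F, quadraticChar F (x * t) * quadraticChar F (x + x * t)
      = quadraticChar F t * quadraticChar F (t + 1) := by
    intro t
    have hxt : x + x * t = x * (t + 1) := by ring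
    rw [hxt, map_mul, map_mul]
    linear_combination
      (quadraticChar F t * quadraticChar F (t + 1)) * quadraticChar_sq_one hx
  rw [Finset.sum_congr rfl fun t _ => key t]
  exact aux_J hF

private lemma aux_inner (hF : ringChar F ≠ 2) {x : F} (hx : x ≠ 0) :
    ∑ y : F, (1 - quadraticChar F y) * (1 - quadraticChar F (x + y))
      = (Fintype.card F : ℤ) - 1 := by
  have h : ∀ y : F, (1 - quadraticChar F y) * (1 - quadraticChar F (x + y))
      = 1 - quadraticChar F y - quadraticChar F (x + y)
        + quadraticChar F y * quadraticChar F (x + y) := by intro y; ring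
  rw [Finset.sum_congr rfl fun y _ => h y, Finset.sum_add_distrib,
    Finset.sum_sub_distrib, Finset.sum_sub_distrib, Finset.sum_const,
    quadraticChar_sum_zero hF, aux_shift hF x, aux_L3 hF hx, Finset.card_univ]
  ring

end aux

theorem stmt_13 (F : Type*) [Field F] [Fintype F]
    (hodd : Odd (Fintype.card F)) (hsq : IsSquare (-1 : F)) :
    (Set.ncard {xy : F × F | xy.1 ≠ 0 ∧ IsSquare xy.1 ∧ xy.2 ≠ 0 ∧ ¬IsSquare xy.2 ∧
        ¬IsSquare (xy.1 + xy.2)} : ℚ) =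
      ((Fintype.card F : ℚ) - 1) ^ 2 / 8 := by
  classical
  have hF : ringChar F ≠ 2 := by
    intro h
    have h1 := FiniteField.even_card_of_char_two h
    have h2 := Nat.odd_iff.mp hodd
    omega
  have hset : {xy : F × F | xy.1 ≠ 0 ∧ IsSquare xy.1 ∧ xy.2 ≠ 0 ∧ ¬IsSquare xy.2 ∧
      ¬IsSquare (xy.1 + xy.2)} = ↑(Finset.univ.filter (fun xy : F × F =>
        xy.1 ≠ 0 ∧ IsSquare xy.1 ∧ xy.2 ≠ 0 ∧ ¬IsSquare xy.2 ∧
        ¬IsSquare (xy.1 + xy.2))) := by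
    ext p; simp
  rw [hset, Set.ncard_coe_finset]
  have hpoint : ∀ p : F × F, (if (p.1 ≠ 0 ∧ IsSquare p.1 ∧ p.2 ≠ 0 ∧ ¬IsSquare p.2 ∧
        ¬IsSquare (p.1 + p.2)) then (8:ℤ) else 0)
      = quadraticChar F p.1 ^ 2 * ((1 + quadraticChar F p.1) *
          ((1 - quadraticChar F p.2) * (1 - quadraticChar F (p.1 + p.2)))) := by
    rintro ⟨x, y⟩
    simp only
    rcases eq_or_ne x 0 with hx | hx
    · simp [hx]
    rw [quadraticChar_sq_one hx, one_mul]
    by_cases hxs : IsSquare x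
    swap
    · rw [quadraticChar_neg_one_iff_not_isSquare.mpr hxs]
      simp [hxs]
    rw [(quadraticChar_one_iff_isSquare hx).mpr hxs]
    rcases eq_or_ne y 0 with hy | hy
    · rw [hy, add_zero, (quadraticChar_one_iff_isSquare hx).mpr hxs]
      simp [hy]
    by_cases hys : IsSquare y
    · rw [(quadraticChar_one_iff_isSquare hy).mpr hys]
      simp [hys]
    rw [quadraticChar_neg_one_iff_not_isSquare.mpr hys]
    have hxy : x + y ≠ 0 := by
      intro h
      apply hys
      have : y = (-1) * x := by linear_combination h
      rw [this]
      exact hsq.mul hxs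
    by_cases hs : IsSquare (x + y)
    · rw [(quadraticChar_one_iff_isSquare hxy).mpr hs]
      simp [hs, hx, hxs, hy, hys]
    · rw [quadraticChar_neg_one_iff_not_isSquare.mpr hs]
      rw [if_pos ⟨hx, hxs, hy, hys, hs⟩]
      norm_num
  have hZ : ((Finset.univ.filter (fun xy : F × F =>
        xy.1 ≠ 0 ∧ IsSquare xy.1 ∧ xy.2 ≠ 0 ∧ ¬IsSquare xy.2 ∧
        ¬IsSquare (xy.1 + xy.2))).card : ℤ) * 8 = ((Fintype.card F : ℤ) - 1) ^ 2 := by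
    calc ((Finset.univ.filter (fun xy : F × F =>
          xy.1 ≠ 0 ∧ IsSquare xy.1 ∧ xy.2 ≠ 0 ∧ ¬IsSquare xy.2 ∧
          ¬IsSquare (xy.1 + xy.2))).card : ℤ) * 8
        = ∑ _p ∈ Finset.univ.filter (fun xy : F × F =>
            xy.1 ≠ 0 ∧ IsSquare xy.1 ∧ xy.2 ≠ 0 ∧ ¬IsSquare xy.2 ∧
            ¬IsSquare (xy.1 + xy.2)), (8:ℤ) := by
          rw [Finset.sum_const, nsmul_eq_mul]
      _ = ∑ p : F × F, (if (p.1 ≠ 0 ∧ IsSquare p.1 ∧ p.2 ≠ 0 ∧ ¬IsSquare p.2 ∧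
            ¬IsSquare (p.1 + p.2)) then (8:ℤ) else 0) := Finset.sum_filter _ _
      _ = ∑ p : F × F, quadraticChar F p.1 ^ 2 * ((1 + quadraticChar F p.1) *
            ((1 - quadraticChar F p.2) * (1 - quadraticChar F (p.1 + p.2)))) :=
          Finset.sum_congr rfl fun p _ => hpoint p
      _ = ∑ x : F, ∑ y : F, quadraticChar F x ^ 2 * ((1 + quadraticChar F x) *
            ((1 - quadraticChar F y) * (1 - quadraticChar F (x + y)))) := by
          rw [Fintype.sum_prod_type]
      _ = ∑ x : F, quadraticChar F x ^ 2 *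
            ((1 + quadraticChar F x) * ((Fintype.card F : ℤ) - 1)) := by
          refine Finset.sum_congr rfl fun x _ => ?_
          rw [← Finset.mul_sum, ← Finset.mul_sum]
          rcases eq_or_ne x 0 with hx | hx
          · simp [hx]
          · rw [aux_inner hF hx]
      _ = (∑ x : F, (1 + quadraticChar F x) * ((Fintype.card F : ℤ) - 1))
            - (1 + quadraticChar F 0) * ((Fintype.card F : ℤ) - 1) :=
          aux_sum_sq_mul _
      _ = ((Fintype.card F : ℤ) - 1) ^ 2 := by
          rw [← Finset.sum_mul, Finset.sum_add_distrib, Finset.sum_const,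
            Finset.card_univ, quadraticChar_sum_zero hF, quadraticChar_zero]
          push_cast
          ring
  have h8 : (8 : ℚ) ≠ 0 := by norm_num
  rw [eq_div_iff h8]
  exact_mod_cast hZ
end

section
/- Let $r$ be an odd prime power with $-1$ a square in $\mathbb{F}_r$. Then the number of triples $(x,y,z) \in (\mathbb{F}_r^*)^3$ such that $x, y$ are nonzero squares, $z$ is a nonsquare, and $x + y + z$ is a nonsquare equals $\frac{(r-1)^3}{16}$. -/
open Finset

section Aux

set_option linter.unusedSectionVars false

variable {F : Type*} [Field F] [Fintype F] [DecidableEq F]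

local notation "χ" => quadraticChar F

private lemma qc_shift (c : F) (G : F → ℤ) : ∑ a : F, G (a + c) = ∑ a : F, G a :=
  Equiv.sum_comp (Equiv.addRight c) G

private lemma qc_sq_s16 (a : F) : (χ a) ^ 2 = if a = 0 then 0 else 1 := by
  by_cases h : a = 0
  · simp [h]
  · rw [if_neg h, quadraticChar_sq_one h]

private lemma qc_sum_sq : ∑ a : F, (χ a) ^ 2 = (Fintype.card F : ℤ) - 1 := by
  have h : ∀ a : F, (χ a) ^ 2 = 1 - (if a = 0 then (1 : ℤ) else 0) := by
    intro a; rw [qc_sq_s16]; split <;> ring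
  rw [Finset.sum_congr rfl fun a _ => h a, Finset.sum_sub_distrib, Finset.sum_const,
    Finset.sum_ite_eq' univ (0 : F) (fun _ => (1 : ℤ))]
  simp [Finset.card_univ]

private lemma qc_key (hF : ringChar F ≠ 2) (h1 : χ (-1) = 1) {w : F} (hw : w ≠ 0) :
    ∑ z : F, χ z * χ (z + w) = -1 := by
  have hJ : ∑ t : F, χ t * χ (1 - t) = -1 := by
    have h := jacobiSum_nontrivial_inv (quadraticChar_ne_one hF)
    rw [(quadraticChar_isQuadratic F).inv] at h
    unfold jacobiSum at h
    rw [h, h1]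
  have h2 : ∑ z : F, χ z * χ (z + w) = ∑ t : F, χ (w * t) * χ (w * t + w) :=
    (Equiv.sum_comp (Equiv.mulLeft₀ w hw) (fun z => χ z * χ (z + w))).symm
  have hw2 : χ w * χ w = 1 := by
    have := quadraticChar_sq_one hw; rwa [sq] at this
  have h3 : ∀ t : F, χ (w * t) * χ (w * t + w) = χ t * χ (t + 1) := by
    intro t
    rw [show w * t + w = w * (t + 1) by ring, map_mul, map_mul]
    calc (χ w * χ t) * (χ w * χ (t + 1)) = (χ w * χ w) * (χ t * χ (t + 1)) := by ring
      _ = χ t * χ (t + 1) := by rw [hw2, one_mul]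
  rw [h2, Finset.sum_congr rfl fun t _ => h3 t]
  have h4 : ∑ t : F, χ t * χ (t + 1) = ∑ s : F, χ (-s) * χ (-s + 1) :=
    (Equiv.sum_comp (Equiv.neg F) (fun t => χ t * χ (t + 1))).symm
  have h5 : ∀ s : F, χ (-s) * χ (-s + 1) = χ s * χ (1 - s) := by
    intro s
    rw [show (-s : F) = -1 * s by ring, show (-1 * s + 1 : F) = 1 - s by ring, map_mul, h1, one_mul]
  rw [h4, Finset.sum_congr rfl fun s _ => h5 s, hJ]

private lemma qc_sum_sq_mul (hF : ringChar F ≠ 2) (w : F) :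
    ∑ z : F, (χ z) ^ 2 * χ (z + w) = -χ w := by
  have h : ∀ z : F, (χ z) ^ 2 * χ (z + w) = χ (z + w) - (if z = 0 then χ w else 0) := by
    intro z; by_cases hz : z = 0
    · simp [hz]
    · rw [quadraticChar_sq_one hz, if_neg hz]; ring
  rw [Finset.sum_congr rfl fun z _ => h z, Finset.sum_sub_distrib,
    qc_shift w (fun z => χ z), quadraticChar_sum_zero hF,
    Finset.sum_ite_eq' univ (0 : F) (fun _ => χ w)]
  simp

private lemma qc_sum_mul_sq (hF : ringChar F ≠ 2) (h1 : χ (-1) = 1) (w : F) :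
    ∑ z : F, χ z * (χ (z + w)) ^ 2 = -χ w := by
  have hneg : χ (-w) = χ w := by
    rw [show (-w : F) = -1 * w by ring, map_mul, h1, one_mul]
  have h : ∀ z : F, χ z * (χ (z + w)) ^ 2 = χ z - (if z = -w then χ z else 0) := by
    intro z; by_cases hz : z = -w
    · subst hz; simp
    · have hzw : z + w ≠ 0 := fun hh => hz (eq_neg_of_add_eq_zero_left hh)
      rw [quadraticChar_sq_one hzw, if_neg hz]; ring
  rw [Finset.sum_congr rfl fun z _ => h z, Finset.sum_sub_distrib, quadraticChar_sum_zero hF,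
    Finset.sum_ite_eq' univ (-w : F) (fun z => χ z)]
  simp [hneg]

private lemma qc_sum_sq_sq (w : F) (hw : w ≠ 0) :
    ∑ z : F, (χ z) ^ 2 * (χ (z + w)) ^ 2 = (Fintype.card F : ℤ) - 2 := by
  have key : ∀ z : F, (χ z) ^ 2 * (χ (z + w)) ^ 2
      = 1 - (if z = 0 then (1 : ℤ) else 0) - (if z = -w then (1 : ℤ) else 0) := by
    intro z
    by_cases h0 : z = 0
    · have : (0 : F) ≠ -w := fun h => hw (by simpa using h.symm)
      simp [h0, this]
    · by_cases h1' : z = -w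
      · subst h1'; simp [h0]
      · have hzw : z + w ≠ 0 := fun hh => h1' (eq_neg_of_add_eq_zero_left hh)
        rw [quadraticChar_sq_one h0, quadraticChar_sq_one hzw, if_neg h0, if_neg h1']
        ring
  rw [Finset.sum_congr rfl fun z _ => key z, Finset.sum_sub_distrib, Finset.sum_sub_distrib,
    Finset.sum_const, Finset.sum_ite_eq' univ (0 : F) (fun _ => (1 : ℤ)),
    Finset.sum_ite_eq' univ (-w : F) (fun _ => (1 : ℤ))]
  simp [Finset.card_univ]
  ring

private lemma qc_sumS (hF : ringChar F ≠ 2) (h1 : χ (-1) = 1) (w : F) :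
    ∑ z : F, ((χ z) ^ 2 - χ z) * ((χ (z + w)) ^ 2 - χ (z + w))
      = ((Fintype.card F : ℤ) - 3) + 2 * χ w
        + (if w = 0 then (Fintype.card F : ℤ) + 1 else 0) := by
  by_cases hw : w = 0
  · subst hw
    have h2 : ∀ z : F, ((χ z) ^ 2 - χ z) * ((χ z) ^ 2 - χ z)
        = 2 * (χ z) ^ 2 - 2 * χ z := by
      intro z
      rcases quadraticChar_isQuadratic F z with h | h | h <;> rw [h] <;> ring
    simp only [add_zero]
    rw [Finset.sum_congr rfl fun z _ => h2 z]
    rw [Finset.sum_sub_distrib, ← Finset.mul_sum, ← Finset.mul_sum, qc_sum_sq,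
      quadraticChar_sum_zero hF]
    simp
    ring
  · have expand : ∀ z : F, ((χ z) ^ 2 - χ z) * ((χ (z + w)) ^ 2 - χ (z + w))
        = (χ z) ^ 2 * (χ (z + w)) ^ 2 - (χ z) ^ 2 * χ (z + w)
          - χ z * (χ (z + w)) ^ 2 + χ z * χ (z + w) := by
      intro z; ring
    rw [Finset.sum_congr rfl fun z _ => expand z, Finset.sum_add_distrib,
      Finset.sum_sub_distrib, Finset.sum_sub_distrib,
      qc_sum_sq_sq w hw, qc_sum_sq_mul hF w, qc_sum_mul_sq hF h1 w, qc_key hF h1 hw, if_neg hw]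
    ring

private lemma qc_sum_f (hF : ringChar F ≠ 2) :
    ∑ a : F, ((χ a) ^ 2 + χ a) = (Fintype.card F : ℤ) - 1 := by
  rw [Finset.sum_add_distrib, qc_sum_sq, quadraticChar_sum_zero hF]; ring

private lemma qc_sum_fχ (hF : ringChar F ≠ 2) :
    ∑ a : F, ((χ a) ^ 2 + χ a) * χ a = (Fintype.card F : ℤ) - 1 := by
  have h : ∀ a : F, ((χ a) ^ 2 + χ a) * χ a = (χ a) ^ 2 + χ a := by
    intro a; rcases quadraticChar_isQuadratic F a with h | h | h <;> rw [h] <;> ring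
  rw [Finset.sum_congr rfl fun a _ => h a, qc_sum_f hF]

private lemma qc_sum_ff (hF : ringChar F ≠ 2) (h1 : χ (-1) = 1) :
    ∑ a : F, ((χ a) ^ 2 + χ a) * ((χ (-a)) ^ 2 + χ (-a))
      = 2 * ((Fintype.card F : ℤ) - 1) := by
  have hneg : ∀ a : F, χ (-a) = χ a := fun a => by
    rw [show (-a : F) = -1 * a by ring, map_mul, h1, one_mul]
  have h : ∀ a : F, ((χ a) ^ 2 + χ a) * ((χ (-a)) ^ 2 + χ (-a))
      = 2 * (χ a) ^ 2 + 2 * χ a := by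
    intro a; rw [hneg a]
    rcases quadraticChar_isQuadratic F a with h | h | h <;> rw [h] <;> ring
  rw [Finset.sum_congr rfl fun a _ => h a, Finset.sum_add_distrib, ← Finset.mul_sum,
    ← Finset.mul_sum, qc_sum_sq, quadraticChar_sum_zero hF]
  ring

private lemma qc_innerP2 (hF : ringChar F ≠ 2) (h1 : χ (-1) = 1) (x : F) :
    ∑ y : F, ((χ y) ^ 2 + χ y) * χ (x + y)
      = -χ x + (if x = 0 then (Fintype.card F : ℤ) - 1 else -1) := by
  have h : ∀ y : F, ((χ y) ^ 2 + χ y) * χ (x + y)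
      = (χ y) ^ 2 * χ (y + x) + χ y * χ (y + x) := by
    intro y; rw [add_comm x y]; ring
  rw [Finset.sum_congr rfl fun y _ => h y, Finset.sum_add_distrib, qc_sum_sq_mul hF x]
  by_cases hx : x = 0
  · subst hx
    have h2 : ∀ y : F, χ y * χ (y + 0) = (χ y) ^ 2 := by intro y; rw [add_zero, sq]
    rw [Finset.sum_congr rfl fun y _ => h2 y, qc_sum_sq, if_pos rfl]
  · rw [qc_key hF h1 hx, if_neg hx]

private lemma qc_total (hF : ringChar F ≠ 2) (h1 : χ (-1) = 1) :
    ∑ x : F, ∑ y : F, ∑ z : F,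
      ((χ x) ^ 2 + χ x) * ((χ y) ^ 2 + χ y) *
        (((χ z) ^ 2 - χ z) * ((χ (x + y + z)) ^ 2 - χ (x + y + z)))
      = ((Fintype.card F : ℤ) - 1) ^ 3 := by
  have step1 : ∀ x y : F, ∑ z : F,
      ((χ x) ^ 2 + χ x) * ((χ y) ^ 2 + χ y) *
        (((χ z) ^ 2 - χ z) * ((χ (x + y + z)) ^ 2 - χ (x + y + z)))
      = ((χ x) ^ 2 + χ x) * ((χ y) ^ 2 + χ y) *
        (((Fintype.card F : ℤ) - 3) + 2 * χ (x + y)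
          + (if x + y = 0 then (Fintype.card F : ℤ) + 1 else 0)) := by
    intro x y
    rw [← Finset.mul_sum]
    congr 1
    have hrw : ∀ z : F, (((χ z) ^ 2 - χ z) * ((χ (x + y + z)) ^ 2 - χ (x + y + z)))
        = (((χ z) ^ 2 - χ z) * ((χ (z + (x + y))) ^ 2 - χ (z + (x + y)))) := by
      intro z; rw [show x + y + z = z + (x + y) by ring]
    rw [Finset.sum_congr rfl fun z _ => hrw z, qc_sumS hF h1 (x + y)]
  rw [Finset.sum_congr rfl fun x _ => Finset.sum_congr rfl fun y _ => step1 x y]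
  have step2 : ∀ x : F, ∑ y : F,
      ((χ x) ^ 2 + χ x) * ((χ y) ^ 2 + χ y) *
        (((Fintype.card F : ℤ) - 3) + 2 * χ (x + y)
          + (if x + y = 0 then (Fintype.card F : ℤ) + 1 else 0))
      = ((χ x) ^ 2 + χ x) *
        (((Fintype.card F : ℤ) - 3) * ((Fintype.card F : ℤ) - 1)
          + 2 * (-χ x + (if x = 0 then (Fintype.card F : ℤ) - 1 else -1))
          + ((χ (-x)) ^ 2 + χ (-x)) * ((Fintype.card F : ℤ) + 1)) := by
    intro x
    have hexp : ∀ y : F, ((χ x) ^ 2 + χ x) * ((χ y) ^ 2 + χ y) *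
        (((Fintype.card F : ℤ) - 3) + 2 * χ (x + y)
          + (if x + y = 0 then (Fintype.card F : ℤ) + 1 else 0))
        = ((χ x) ^ 2 + χ x) *
          (((Fintype.card F : ℤ) - 3) * ((χ y) ^ 2 + χ y)
            + 2 * (((χ y) ^ 2 + χ y) * χ (x + y))
            + ((χ y) ^ 2 + χ y) * (if x + y = 0 then (Fintype.card F : ℤ) + 1 else 0)) := by
      intro y; ring
    have hite_sum : ∑ y : F, ((χ y) ^ 2 + χ y) *
        (if x + y = 0 then (Fintype.card F : ℤ) + 1 else 0)
        = ((χ (-x)) ^ 2 + χ (-x)) * ((Fintype.card F : ℤ) + 1) := by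
      have hite : ∀ y : F, ((χ y) ^ 2 + χ y) *
          (if x + y = 0 then (Fintype.card F : ℤ) + 1 else 0)
          = (if y = -x then ((χ y) ^ 2 + χ y) * ((Fintype.card F : ℤ) + 1) else 0) := by
        intro y; by_cases hy : y = -x
        · subst hy; rw [if_pos (by ring), if_pos rfl]
        · rw [if_neg (fun hh => hy (eq_neg_of_add_eq_zero_right hh)), if_neg hy, mul_zero]
      rw [Finset.sum_congr rfl fun y _ => hite y,
        Finset.sum_ite_eq' univ (-x : F)
          (fun y => ((χ y) ^ 2 + χ y) * ((Fintype.card F : ℤ) + 1))]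
      simp
    rw [Finset.sum_congr rfl fun y _ => hexp y, ← Finset.mul_sum]
    congr 1
    rw [Finset.sum_add_distrib, Finset.sum_add_distrib, ← Finset.mul_sum, ← Finset.mul_sum,
      qc_sum_f hF, qc_innerP2 hF h1 x, hite_sum]
  rw [Finset.sum_congr rfl fun x _ => step2 x]
  have hexp2 : ∀ x : F, ((χ x) ^ 2 + χ x) *
      (((Fintype.card F : ℤ) - 3) * ((Fintype.card F : ℤ) - 1)
        + 2 * (-χ x + (if x = 0 then (Fintype.card F : ℤ) - 1 else -1))
        + ((χ (-x)) ^ 2 + χ (-x)) * ((Fintype.card F : ℤ) + 1))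
      = ((Fintype.card F : ℤ) - 3) * ((Fintype.card F : ℤ) - 1) * ((χ x) ^ 2 + χ x)
        - 2 * (((χ x) ^ 2 + χ x) * χ x)
        + 2 * (((χ x) ^ 2 + χ x) * (if x = 0 then (Fintype.card F : ℤ) - 1 else -1))
        + ((Fintype.card F : ℤ) + 1) * (((χ x) ^ 2 + χ x) * ((χ (-x)) ^ 2 + χ (-x))) := by
    intro x; ring
  have hite2 : ∑ x : F, ((χ x) ^ 2 + χ x) *
      (if x = 0 then (Fintype.card F : ℤ) - 1 else -1)
      = -((Fintype.card F : ℤ) - 1) := by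
    have h : ∀ x : F, ((χ x) ^ 2 + χ x) *
        (if x = 0 then (Fintype.card F : ℤ) - 1 else -1)
        = -(((χ x) ^ 2 + χ x)) := by
      intro x; by_cases hx : x = 0
      · simp [hx]
      · rw [if_neg hx]; ring
    rw [Finset.sum_congr rfl fun x _ => h x, Finset.sum_neg_distrib, qc_sum_f hF]
  rw [Finset.sum_congr rfl fun x _ => hexp2 x]
  rw [Finset.sum_add_distrib, Finset.sum_add_distrib, Finset.sum_sub_distrib,
    ← Finset.mul_sum, ← Finset.mul_sum, ← Finset.mul_sum, ← Finset.mul_sum,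
    qc_sum_f hF, qc_sum_fχ hF, qc_sum_ff hF h1, hite2]
  ring

end Aux

theorem stmt_16 (F : Type*) [Field F] [Fintype F]
    (hodd : Odd (Fintype.card F)) (hsq : IsSquare (-1 : F)) :
    (Set.ncard {t : F × F × F |
        t.1 ≠ 0 ∧ IsSquare t.1 ∧ t.2.1 ≠ 0 ∧ IsSquare t.2.1 ∧
          t.2.2 ≠ 0 ∧ ¬IsSquare t.2.2 ∧
          ¬IsSquare (t.1 + t.2.1 + t.2.2)} : ℚ) =
      ((Fintype.card F : ℚ) - 1) ^ 3 / 16 := by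
  classical
  have hF : ringChar F ≠ 2 := by
    intro h
    have h2 := FiniteField.even_card_of_char_two h
    rw [Nat.odd_iff] at hodd
    omega
  have h1 : quadraticChar F (-1) = 1 := by
    rw [quadraticChar_one_iff_isSquare (neg_ne_zero.mpr (one_ne_zero))]
    exact hsq
  have find : ∀ a : F, (quadraticChar F a) ^ 2 + quadraticChar F a
      = if a ≠ 0 ∧ IsSquare a then (2 : ℤ) else 0 := by
    intro a
    by_cases h0 : a = 0
    · simp [h0]
    · by_cases hs : IsSquare a
      · rw [(quadraticChar_one_iff_isSquare h0).mpr hs, if_pos ⟨h0, hs⟩]; ring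
      · rw [quadraticChar_neg_one_iff_not_isSquare.mpr hs,
          if_neg (fun h => hs h.2)]; ring
  have gind : ∀ a : F, (quadraticChar F a) ^ 2 - quadraticChar F a
      = if a ≠ 0 ∧ ¬IsSquare a then (2 : ℤ) else 0 := by
    intro a
    by_cases h0 : a = 0
    · simp [h0]
    · by_cases hs : IsSquare a
      · rw [(quadraticChar_one_iff_isSquare h0).mpr hs,
          if_neg (fun h => h.2 hs)]; ring
      · rw [quadraticChar_neg_one_iff_not_isSquare.mpr hs, if_pos ⟨h0, hs⟩]; ring
  set P : F × F × F → Prop := fun t =>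
    t.1 ≠ 0 ∧ IsSquare t.1 ∧ t.2.1 ≠ 0 ∧ IsSquare t.2.1 ∧
      t.2.2 ≠ 0 ∧ ¬IsSquare t.2.2 ∧ ¬IsSquare (t.1 + t.2.1 + t.2.2) with hP
  have hcard : {t : F × F × F | P t}.ncard = (univ.filter P).card := by
    rw [Set.ncard_eq_toFinset_card', Set.toFinset_setOf]
  have hpoint : ∀ t : F × F × F,
      ((quadraticChar F t.1) ^ 2 + quadraticChar F t.1) *
        ((quadraticChar F t.2.1) ^ 2 + quadraticChar F t.2.1) *
        (((quadraticChar F t.2.2) ^ 2 - quadraticChar F t.2.2) *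
          ((quadraticChar F (t.1 + t.2.1 + t.2.2)) ^ 2
            - quadraticChar F (t.1 + t.2.1 + t.2.2)))
      = if P t then (16 : ℤ) else 0 := by
    intro t
    rw [find t.1, find t.2.1, gind t.2.2, gind (t.1 + t.2.1 + t.2.2)]
    by_cases hPt : P t
    · have hPt' : t.1 ≠ 0 ∧ IsSquare t.1 ∧ t.2.1 ≠ 0 ∧ IsSquare t.2.1 ∧
          t.2.2 ≠ 0 ∧ ¬IsSquare t.2.2 ∧ ¬IsSquare (t.1 + t.2.1 + t.2.2) := hPt
      obtain ⟨a1, a2, a3, a4, a5, a6, a7⟩ := hPt'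
      have c4 : t.1 + t.2.1 + t.2.2 ≠ 0 := by
        intro h; exact a7 (by rw [h]; exact ⟨0, by ring⟩)
      rw [if_pos hPt, if_pos ⟨a1, a2⟩, if_pos ⟨a3, a4⟩, if_pos ⟨a5, a6⟩, if_pos ⟨c4, a7⟩]
      norm_num
    · rw [if_neg hPt]
      have hPt' : ¬(t.1 ≠ 0 ∧ IsSquare t.1 ∧ t.2.1 ≠ 0 ∧ IsSquare t.2.1 ∧
          t.2.2 ≠ 0 ∧ ¬IsSquare t.2.2 ∧ ¬IsSquare (t.1 + t.2.1 + t.2.2)) := hPt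
      split_ifs with c1 c2 c3 c4
      · exact absurd ⟨c1.1, c1.2, c2.1, c2.2, c3.1, c3.2, c4.2⟩ hPt'
      all_goals norm_num
  have hZ : (16 : ℤ) * ((univ.filter P).card : ℤ)
      = ((Fintype.card F : ℤ) - 1) ^ 3 := by
    have hs1 : ∑ t : F × F × F, (if P t then (16 : ℤ) else 0)
        = (16 : ℤ) * ((univ.filter P).card : ℤ) := by
      rw [Finset.sum_ite, Finset.sum_const, Finset.sum_const_zero, add_zero,
        nsmul_eq_mul, mul_comm]
    rw [← hs1, ← Finset.sum_congr rfl fun t _ => hpoint t]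
    rw [Fintype.sum_prod_type]
    have := qc_total (F := F) hF h1
    rw [← this]
    refine Finset.sum_congr rfl fun x _ => ?_
    rw [Fintype.sum_prod_type]
  rw [hcard]
  have hQ : (16 : ℚ) * ((univ.filter P).card : ℚ)
      = ((Fintype.card F : ℚ) - 1) ^ 3 := by exact_mod_cast hZ
  rw [eq_div_iff (by norm_num : (16 : ℚ) ≠ 0)]
  linarith [hQ]
end

section
/- Let $r$ be an odd prime power with $-1$ a square in $\mathbb{F}_r$, and let $\rho$ be the quadratic character of $\mathbb{F}_r$ extended by $\rho(0)=0$. For a positive integer $u$ and a sequence $i_1, \ldots, i_{u+1} \in \{0,1\}$, let $\Omega_{i_1 \cdots i_u i_{u+1}}$ be the number of tuples $(x_1,\ldots,x_u) \in (\mathbb{F}_r^*)^u$ with $x_j \in C_{i_j}^{(2,r)}$ for each $j$ and $\sum_j x_j \in C_{i_{u+1}}^{(2,r)}$. Then $\Omega_{i_1\cdots i_u i_{u+1}} = \frac{r-1}{2^{u+1}}\Big\{\frac{(r-1)^u - (-1)^u}{r} - (-1)^u \sum_{1 \le l \le (u+1)/2} r^{l-1} \sum_{1 \le j_1 < \cdots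 < j_{2l} \le u+1} (-1)^{i_{j_1} + \cdots + i_{j_{2l}}}\Big\}$. -/
/-!
Work in the group algebra `ℚ[F]`, i.e. functions on `F` under convolution. Since `-1` is a
square, `C_c = -C_c`, so the condition `∑ x_j ∈ C_{i_{u+1}}` is one more convolution factor and
the count is the coefficient at `0` of `∏_j 𝟙_{C_{i_j}}`. Writing `𝟙_{C_c} = (ν + (-1)^c χ) / 2`
with `ν` the indicator of `Fˣ` and `χ` the quadratic character, the product expands into the
coefficients at `0` of `χ^k ν^m`. These follow from three relations, where `J` is the constant
function `1`: `J² = r J`, `χ J = 0`, and `χ² = r - J` (the Jacobi sum `J(χ, χ) = -χ(-1) = -1`).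
Hence `χ ν = -χ` and `χ³ = r χ`, so odd `k` contribute nothing, and `ν = J - 1` handles `k = 0`.
-/

open Finset AddMonoidAlgebra

namespace AddMonoidAlgebra

variable {R G : Type*}

noncomputable def ofFun [Semiring R] [Fintype G] (f : G → R) : R[G] :=
  ofCoeff (Finsupp.equivFunOnFinite.symm f)

@[simp]
lemma coeff_ofFun [Semiring R] [Fintype G] (f : G → R) (a : G) : (ofFun f).coeff a = f a := rfl

lemma coeff_one [Semiring R] [AddZeroClass G] [DecidableEq G] (a : G) :
    (1 : R[G]).coeff a = if a = 0 then 1 else 0 := by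
  simp [one_def, Finsupp.single_apply, eq_comm]

lemma coeff_mul_eq_sum [Semiring R] [AddCommGroup G] [Fintype G] (x y : R[G]) (a : G) :
    (x * y).coeff a = ∑ b, x.coeff b * y.coeff (a - b) := by
  rw [coeff_mul_apply_left, Finsupp.sum_fintype _ _ fun _ => zero_mul _]
  simp only [neg_add_eq_sub]

lemma sum_prod_coeff_mul_apply_sum [CommSemiring R] [AddCommGroup G] [Fintype G] {n : ℕ}
    (f : Fin n → R[G]) (g : G → R) :
    ∑ x : Fin n → G, (∏ j, (f j).coeff (x j)) * g (∑ j, x j) =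
      ∑ a, (∏ j, f j).coeff a * g a := by
  classical
  induction n generalizing g with
  | zero => simp [coeff_one]
  | succ n ih =>
    rw [← (Fin.consEquiv fun _ => G).sum_comp, Fintype.sum_prod_type]
    simp only [Fin.consEquiv_apply, Fin.prod_univ_succ, Fin.sum_univ_succ, Fin.cons_zero,
      Fin.cons_succ, mul_assoc, ← Finset.mul_sum]
    simp only [coeff_mul_eq_sum, Finset.sum_mul, mul_assoc]
    rw [Finset.sum_comm]
    refine Finset.sum_congr rfl fun t _ => ?_
    rw [ih _ fun b => g (t + b), Finset.mul_sum]
    exact Fintype.sum_equiv (Equiv.addLeft t) _ _ fun b => by simp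

end AddMonoidAlgebra

lemma sum_range_succ_eq_add_sum_Icc_of_odd_eq_zero {M : Type*} [AddCommMonoid M] (f : ℕ → M)
    (hf : ∀ l, f (2 * l + 1) = 0) (n : ℕ) :
    ∑ k ∈ range (n + 1), f k = f 0 + ∑ l ∈ Icc 1 (n / 2), f (2 * l) := by
  induction n with
  | zero => simp
  | succ n ih =>
    rw [sum_range_succ, ih]
    rcases Nat.even_or_odd' n with ⟨m, rfl | rfl⟩
    · rw [hf, add_zero, show (2 * m + 1) / 2 = 2 * m / 2 by omega]
    · rw [show (2 * m + 1 + 1) / 2 = m + 1 by omega, sum_Icc_succ_top (by omega),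
        show (2 * m + 1) / 2 = m by omega, add_assoc, show 2 * m + 1 + 1 = 2 * (m + 1) by ring]

lemma inClass_neg_iff {F : Type*} [Field F] (hsq : IsSquare (-1 : F)) {y : F} {c : Fin 2} :
    inClass (-y) c ↔ inClass y c := by
  have : IsSquare (-y) ↔ IsSquare y :=
    ⟨fun h => by simpa using hsq.mul h, fun h => by simpa using hsq.mul h⟩
  simp [inClass, this]

section QuadraticClasses

variable {F : Type*} [Field F] [Fintype F]

lemma sum_quadraticChar_mul_quadraticChar_sub [DecidableEq F] (hF : ringChar F ≠ 2)
    (hsq : IsSquare (-1 : F)) (a : F) :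
    ∑ b, quadraticChar F b * quadraticChar F (a - b) =
      if a = 0 then (Fintype.card F : ℤ) - 1 else -1 := by
  set χ := quadraticChar F
  have hχ : χ (-1) = 1 := (quadraticChar_one_iff_isSquare (neg_ne_zero.mpr one_ne_zero)).mpr hsq
  split_ifs with ha
  · have h : ∀ b : F, χ b * χ (a - b) = if b = 0 then 0 else 1 := by
      intro b
      rw [ha, zero_sub, ← map_mul, show b * -b = -1 * b ^ 2 by ring, map_mul, hχ, one_mul]
      split_ifs with hb
      · simp [hb, χ]
      · exact quadraticChar_sq_one' hb
    simp [h, Finset.sum_ite, Finset.filter_ne', Nat.cast_sub Fintype.card_pos]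
  · calc ∑ b, χ b * χ (a - b) = ∑ c, χ (a * c) * χ (a - a * c) :=
          (Fintype.sum_equiv (Equiv.mulLeft₀ a ha) _ _ fun _ => rfl).symm
      _ = jacobiSum χ χ := by
          refine Finset.sum_congr rfl fun c _ => ?_
          rw [show a - a * c = a * (1 - c) by ring, map_mul, map_mul]
          linear_combination (χ c * χ (1 - c)) * quadraticChar_sq_one ha
      _ = -1 := by
          have := jacobiSum_nontrivial_inv (quadraticChar_ne_one hF)
          rwa [(quadraticChar_isQuadratic F).inv, hχ] at this

variable (F) in
noncomputable def onesAlg : ℚ[F] := ofFun 1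

variable (F) in
noncomputable def unitsAlg : ℚ[F] := onesAlg F - 1

variable (F) in
noncomputable def quadCharAlg [DecidableEq F] : ℚ[F] := ofFun fun y => (quadraticChar F y : ℚ)

variable (F) in
noncomputable def classAlg [DecidableEq F] (c : Fin 2) : ℚ[F] :=
  (2⁻¹ : ℚ) • (unitsAlg F + (-1 : ℚ) ^ (c : ℕ) • quadCharAlg F)

lemma onesAlg_mul_onesAlg : onesAlg F * onesAlg F = (Fintype.card F : ℚ) • onesAlg F := by
  ext a
  simp [coeff_mul_eq_sum, onesAlg]

lemma coeff_zero_unitsAlg_pow (m : ℕ) : (unitsAlg F ^ m).coeff 0 =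
    ((Fintype.card F - 1 : ℚ) ^ m + (-1) ^ m * (Fintype.card F - 1)) / Fintype.card F := by
  classical
  set r : ℚ := (Fintype.card F : ℚ)
  have key : r • unitsAlg F ^ m = ((-1) ^ m * r) • 1 + ((r - 1) ^ m - (-1) ^ m) • onesAlg F := by
    induction m with
    | zero => simp [unitsAlg]
    | succ m ih =>
      have hJ : onesAlg F * onesAlg F = r • onesAlg F := onesAlg_mul_onesAlg
      have hν : unitsAlg F = onesAlg F - 1 := rfl
      simp only [Algebra.smul_def, map_sub, map_pow, map_neg, map_one, map_mul] at ih hJ ⊢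
      set R := algebraMap ℚ ℚ[F] r
      linear_combination unitsAlg F * ih + ((R - 1) ^ m - (-1) ^ m) * hJ +
        ((-1) ^ m * R + ((R - 1) ^ m - (-1) ^ m) * onesAlg F) * hν
  have hr : r ≠ 0 := Nat.cast_ne_zero.mpr Fintype.card_ne_zero
  have := congrArg (fun x => x.coeff 0) key
  simp [onesAlg, coeff_one] at this
  field_simp
  linear_combination this

variable [DecidableEq F]

lemma coeff_classAlg (c : Fin 2) (y : F) [Decidable (inClass y c)] :
    (classAlg F c).coeff y = if inClass y c then 1 else 0 := by
  simp only [classAlg, unitsAlg, onesAlg, quadCharAlg, coeff_smul_apply, coeff_add, coeff_sub,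
    Finsupp.add_apply, Finsupp.sub_apply, coeff_one, coeff_ofFun, smul_eq_mul]
  by_cases hy : y = 0
  · simp [hy, inClass]
  by_cases hsq : IsSquare y
  · rw [(quadraticChar_one_iff_isSquare hy).mpr hsq]
    fin_cases c <;> norm_num [inClass, hy, hsq]
  · rw [quadraticChar_neg_one_iff_not_isSquare.mpr hsq]
    fin_cases c <;> norm_num [inClass, hy, hsq]

lemma quadCharAlg_mul_onesAlg (hF : ringChar F ≠ 2) : quadCharAlg F * onesAlg F = 0 := by
  ext a
  simp [coeff_mul_eq_sum, quadCharAlg, onesAlg]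
  exact_mod_cast quadraticChar_sum_zero hF

lemma quadCharAlg_mul_self (hF : ringChar F ≠ 2) (hsq : IsSquare (-1 : F)) :
    quadCharAlg F * quadCharAlg F = (Fintype.card F : ℚ) • 1 - onesAlg F := by
  ext a
  have h := congrArg (Int.cast : ℤ → ℚ) (sum_quadraticChar_mul_quadraticChar_sub hF hsq a)
  push_cast at h
  simp only [coeff_mul_eq_sum, quadCharAlg, coeff_ofFun, h]
  split_ifs with ha <;> simp [onesAlg, coeff_one, ha]

lemma quadCharAlg_mul_unitsAlg_pow (hF : ringChar F ≠ 2) (m : ℕ) :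
    quadCharAlg F * unitsAlg F ^ m = (-1 : ℚ) ^ m • quadCharAlg F := by
  induction m with
  | zero => simp
  | succ m ih =>
    rw [pow_succ, ← mul_assoc, ih, smul_mul_assoc, unitsAlg, mul_sub, quadCharAlg_mul_onesAlg hF,
      pow_succ, mul_smul]
    simp

lemma quadCharAlg_pow_odd (hF : ringChar F ≠ 2) (hsq : IsSquare (-1 : F)) (l : ℕ) :
    quadCharAlg F ^ (2 * l + 1) = (Fintype.card F : ℚ) ^ l • quadCharAlg F := by
  induction l with
  | zero => simp
  | succ l ih =>
    rw [show 2 * (l + 1) + 1 = 2 * l + 1 + 2 by ring, pow_add, ih, pow_two,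
      quadCharAlg_mul_self hF hsq, smul_mul_assoc, mul_sub, quadCharAlg_mul_onesAlg hF, pow_succ,
      mul_smul]
    simp

lemma coeff_zero_quadCharAlg_pow_odd_mul (hF : ringChar F ≠ 2) (hsq : IsSquare (-1 : F))
    (l m : ℕ) : (quadCharAlg F ^ (2 * l + 1) * unitsAlg F ^ m).coeff 0 = 0 := by
  rw [quadCharAlg_pow_odd hF hsq, smul_mul_assoc, quadCharAlg_mul_unitsAlg_pow hF]
  simp [quadCharAlg]

lemma coeff_zero_quadCharAlg_pow_even_mul (hF : ringChar F ≠ 2) (hsq : IsSquare (-1 : F))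
    (l m : ℕ) : (quadCharAlg F ^ (2 * l + 2) * unitsAlg F ^ m).coeff 0 =
      (-1) ^ m * (Fintype.card F : ℚ) ^ l * (Fintype.card F - 1) := by
  rw [pow_succ, mul_assoc, quadCharAlg_mul_unitsAlg_pow hF, mul_smul_comm,
    quadCharAlg_pow_odd hF hsq, smul_mul_assoc, quadCharAlg_mul_self hF hsq]
  simp [onesAlg, coeff_one]
  ring

lemma ncard_eq_coeff_zero_prod_classAlg (hsq : IsSquare (-1 : F)) (u : ℕ)
    (i : Fin (u + 1) → Fin 2) :
    (Set.ncard {x : Fin u → F | (∀ j : Fin u, inClass (x j) (i j.castSucc)) ∧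
        inClass (∑ j, x j) (i (Fin.last u))} : ℚ) = (∏ j, classAlg F (i j)).coeff 0 := by
  classical
  calc _ = ∑ x : Fin u → F, (∏ j, (classAlg F (i j.castSucc)).coeff (x j)) *
        (classAlg F (i (Fin.last u))).coeff (∑ j, x j) := by
        simp only [coeff_classAlg, Finset.prod_boole, ite_zero_mul_ite_zero, mul_one]
        rw [← Finset.natCast_card_filter, Set.ncard_eq_toFinset_card']
        simp
    _ = ∑ a, (∏ j : Fin u, classAlg F (i j.castSucc)).coeff a *
        (classAlg F (i (Fin.last u))).coeff (0 - a) := by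
        rw [sum_prod_coeff_mul_apply_sum]
        simp only [zero_sub, coeff_classAlg, inClass_neg_iff hsq]
    _ = _ := by rw [Fin.prod_univ_castSucc, coeff_mul_eq_sum]

lemma coeff_zero_prod_classAlg {n : ℕ} (c : Fin n → Fin 2) :
    (∏ j, classAlg F (c j)).coeff 0 = 2⁻¹ ^ n * ∑ k ∈ range (n + 1),
      (quadCharAlg F ^ k * unitsAlg F ^ (n - k)).coeff 0 *
        ∑ T ∈ powersetCard k (univ : Finset (Fin n)), (-1) ^ (∑ j ∈ T, (c j : ℕ)) := by
  simp only [classAlg, Finset.prod_smul, prod_const, card_univ, Fintype.card_fin,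
    add_comm (unitsAlg F), Finset.prod_add, Finset.sum_powerset]
  rw [coeff_smul_apply, smul_eq_mul, coeff_sum, Finsupp.finsetSum_apply]
  congr 1
  refine Finset.sum_congr rfl fun k _ => ?_
  rw [coeff_sum, Finsupp.finsetSum_apply, mul_sum]
  refine Finset.sum_congr rfl fun T hT => ?_
  rw [← compl_eq_univ_sdiff, card_compl, Fintype.card_fin, (mem_powersetCard.mp hT).2,
    smul_mul_assoc, coeff_smul_apply, smul_eq_mul, prod_pow_eq_pow_sum, mul_comm]

end QuadraticClasses

theorem stmt_19_general (F : Type*) [Field F] [Fintype F]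
    (hodd : Odd (Fintype.card F)) (hsq : IsSquare (-1 : F))
    (u : ℕ) (i : Fin (u + 1) → Fin 2) :
    (Set.ncard {x : Fin u → F |
        (∀ j : Fin u, inClass (x j) (i j.castSucc)) ∧
          inClass (∑ j, x j) (i (Fin.last u))} : ℚ) =
      ((Fintype.card F : ℚ) - 1) / 2 ^ (u + 1) *
        ((((Fintype.card F : ℚ) - 1) ^ u - (-1) ^ u) / (Fintype.card F : ℚ) -
          (-1) ^ u *
            ∑ l ∈ Finset.Icc 1 ((u + 1) / 2),
              (Fintype.card F : ℚ) ^ (l - 1) *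
                ∑ T ∈ Finset.powersetCard (2 * l) (Finset.univ : Finset (Fin (u + 1))),
                  (-1 : ℚ) ^ (∑ j ∈ T, ((i j : ℕ)))) := by
  classical
  have hF : ringChar F ≠ 2 := by
    rw [Ne, FiniteField.even_card_iff_char_two, Nat.odd_iff.mp hodd]
    decide
  have hr : (Fintype.card F : ℚ) ≠ 0 := Nat.cast_ne_zero.mpr Fintype.card_ne_zero
  have heven : ∀ l ∈ Icc 1 ((u + 1) / 2),
      (quadCharAlg F ^ (2 * l) * unitsAlg F ^ (u + 1 - 2 * l)).coeff 0 *
        ∑ T ∈ powersetCard (2 * l) (univ : Finset (Fin (u + 1))), (-1) ^ (∑ j ∈ T, (i j : ℕ)) =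
      -(-1) ^ u * ((Fintype.card F : ℚ) - 1) * ((Fintype.card F : ℚ) ^ (l - 1) *
        ∑ T ∈ powersetCard (2 * l) (univ : Finset (Fin (u + 1))), (-1) ^ (∑ j ∈ T, (i j : ℕ))) := by
    intro l hl
    obtain ⟨m, rfl⟩ : ∃ m, l = m + 1 := ⟨l - 1, by simp at hl; omega⟩
    obtain ⟨d, rfl⟩ : ∃ d, u = d + 2 * m + 1 := ⟨u - (2 * m + 1), by simp at hl; omega⟩
    rw [show 2 * (m + 1) = 2 * m + 2 by ring, coeff_zero_quadCharAlg_pow_even_mul hF hsq,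
      show d + 2 * m + 1 + 1 - (2 * m + 2) = d by omega, Nat.add_sub_cancel]
    simp only [pow_add, pow_mul]
    ring
  rw [ncard_eq_coeff_zero_prod_classAlg hsq, coeff_zero_prod_classAlg,
    sum_range_succ_eq_add_sum_Icc_of_odd_eq_zero _
      (fun l => by rw [coeff_zero_quadCharAlg_pow_odd_mul hF hsq, zero_mul]),
    sum_congr rfl heven, ← mul_sum, pow_zero, one_mul, Nat.sub_zero, coeff_zero_unitsAlg_pow,
    powersetCard_zero, sum_singleton, sum_empty, pow_zero, mul_one, inv_pow]
  field_simp
  ring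

theorem stmt_19 (F : Type*) [Field F] [Fintype F]
    (hodd : Odd (Fintype.card F)) (hsq : IsSquare (-1 : F))
    (u : ℕ) (hu : 1 ≤ u) (i : Fin (u + 1) → Fin 2) :
    (Set.ncard {x : Fin u → F |
        (∀ j : Fin u, inClass (x j) (i j.castSucc)) ∧
          inClass (∑ j, x j) (i (Fin.last u))} : ℚ) =
      ((Fintype.card F : ℚ) - 1) / 2 ^ (u + 1) *
        ((((Fintype.card F : ℚ) - 1) ^ u - (-1) ^ u) / (Fintype.card F : ℚ) -
          (-1) ^ u *
            ∑ l ∈ Finset.Icc 1 ((u + 1) / 2),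
              (Fintype.card F : ℚ) ^ (l - 1) *
                ∑ T ∈ Finset.powersetCard (2 * l) (Finset.univ : Finset (Fin (u + 1))),
                  (-1 : ℚ) ^ (∑ j ∈ T, ((i j : ℕ)))) :=
  stmt_19_general F hodd hsq u i
end
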